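/- Boundary point lemma for highest waves: let F : ℝ → ℝ be real analytic with F(0) = 0 and F′(0) = −c for some c > 0, let B ∈ ℝ, and let λ ∈ ℝ. Let φ, φ̃ : ℝ → ℝ be continuous, 2π-periodic, with zero mean, both satisfying F(ψ(x)) = −(K∗ψ)(x) + B for all x ∈ ℝ (with the same constant B). Assume φ(x) ≥ φ̃(x) for all x ∈ [λ, λ+π], that φ − φ̃ is odd with respect to λ (i.e., (φ − φ̃)(2λ − x) = −(φ − φ̃)(x) for all x), and that φ(λ) = φ̃(λ) = φ̄ where φ̄ ≠ 0, F′(φ̄) = 0, there exists n ≥ 2 with F^{(n)}(φ̄) ≠ 0, and both φ and φ̃ have an isolated local extremum at λ. Then φ = φ̃ on all of ℝ. -/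

import Mathlib

open Real MeasureTheory Filter

/-- The 2π-periodic kernel of `D⁻²`, equal to `(1/(4π))(|x|−π)² − π/12` on `[−π,π]`. -/
noncomputable def Kper (x : ℝ) : ℝ :=
  (1 / (4 * π)) * (|x - 2 * π * ((round (x / (2 * π)) : ℤ) : ℝ)| - π) ^ 2 - π / 12

/-- Periodic convolution with the kernel `Kper`. -/
noncomputable def Kconv (φ : ℝ → ℝ) (x : ℝ) : ℝ :=
  ∫ y in (-π)..π, Kper (x - y) * φ y

/-!
Put `w = φ - φ̃`. Both `φ` and `φ̃` have an isolated extremum at `λ` with value `φ̄`, and since `F`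
is analytic and not constant near `φ̄`, `F(s) - F(φ̄)` has a constant sign on each side of `φ̄`;
hence `K∗φ = B - F(φ)` and `K∗φ̃` have a local extremum at `λ`, where both are differentiable
(`K` is Lipschitz), so `(K∗w)'(λ) = 0`. Because `w` is odd about `λ`, for `0 ≤ u ≤ π`
`(K∗w)(λ + u) = ∫₀^π G(u, v) w(λ + v) dv` with the Dirichlet Green's function
`G(u, v) = min(u, v) - uv/π ≥ 0`. If `w(λ + v₀) > 0` for some `v₀ ∈ (0, π)`, then
`G(u, v) = u(1 - v/π)` for `v ≥ u` gives `(K∗w)(λ + u) ≥ c u` with `c > 0` for small `u > 0`,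
contradicting `(K∗w)'(λ) = 0` (Hopf's boundary point lemma). So `w = 0` on `[λ, λ + π]`, and by
oddness and periodicity everywhere.
-/

open Set Topology Interval

theorem IsPreconnected.forall_lt_or_forall_gt_of_forall_ne {X α : Type*} [TopologicalSpace X]
    [LinearOrder α] [TopologicalSpace α] [OrderClosedTopology α] {s : Set X} (hs : IsPreconnected s)
    {f : X → α} (hf : ContinuousOn f s) {c : α} (hne : ∀ x ∈ s, f x ≠ c) :
    (∀ x ∈ s, f x < c) ∨ (∀ x ∈ s, c < f x) := by
  by_contra! h
  obtain ⟨⟨x, hx, hxc⟩, ⟨y, hy, hyc⟩⟩ := h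
  obtain ⟨z, hz, hzc⟩ := hs.intermediate_value hy hx hf ⟨hyc, hxc⟩
  exact hne z hz hzc

theorem isLocalExtr_comp_of_eventually_mem {X Y : Type*} [TopologicalSpace X]
    [TopologicalSpace Y] {ψ : X → Y} {F : Y → ℝ} {s : Set Y} {l : X} (hs : IsPreconnected s)
    (hF : ContinuousOn F s) (hne : ∀ y ∈ s, F y ≠ F (ψ l)) (hψ : ∀ᶠ x in 𝓝[≠] l, ψ x ∈ s) :
    IsLocalExtr (F ∘ ψ) l := by
  rw [IsLocalExtr, IsExtrFilter, IsMinFilter, IsMaxFilter, ← nhdsNE_sup_pure l, eventually_sup,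
    eventually_sup, eventually_pure, eventually_pure]
  rcases hs.forall_lt_or_forall_gt_of_forall_ne hF hne with h | h
  · exact Or.inr ⟨hψ.mono fun x hx => (h _ hx).le, le_rfl⟩
  · exact Or.inl ⟨hψ.mono fun x hx => (h _ hx).le, le_rfl⟩

theorem AnalyticAt.eventually_ne_of_iteratedDeriv_ne_zero {𝕜 E : Type*}
    [NontriviallyNormedField 𝕜] [NormedAddCommGroup E] [NormedSpace 𝕜 E] {F : 𝕜 → E} {a : 𝕜}
    (hF : AnalyticAt 𝕜 F a) {m : ℕ} (hm : m ≠ 0) (h : iteratedDeriv m F a ≠ 0) :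
    ∀ᶠ y in 𝓝[≠] a, F y ≠ F a := by
  rcases (hF.sub analyticAt_const).eventually_eq_zero_or_eventually_ne_zero with h0 | h0
  · refine absurd ?_ h
    have hconst : F =ᶠ[𝓝 a] fun _ => F a := h0.mono fun y hy => sub_eq_zero.1 hy
    rw [hconst.iteratedDeriv_eq, iteratedDeriv_const, if_neg hm]
  · exact h0.mono fun y hy => sub_ne_zero.1 hy

theorem eventually_nhdsNE_of_abs_sub_lt {p : ℝ → Prop} {a δ : ℝ} (hδ : 0 < δ)
    (h : ∀ x, 0 < |x - a| → |x - a| < δ → p x) : ∀ᶠ x in 𝓝[≠] a, p x := by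
  filter_upwards [self_mem_nhdsWithin, nhdsWithin_le_nhds (Metric.ball_mem_nhds a hδ)]
    with x hxa hx
  exact h x (abs_pos.2 (sub_ne_zero.2 hxa)) hx

theorem LipschitzWith.hasDerivAt_intervalIntegral_comp_sub_mul {K : ℝ → ℝ} {C : NNReal}
    (hK : LipschitzWith C K) {ψ : ℝ → ℝ} {a b : ℝ} (hψ : IntervalIntegrable ψ volume a b)
    (x₀ : ℝ) :
    HasDerivAt (fun x => ∫ y in a..b, K (x - y) * ψ y)
      (∫ y in a..b, deriv K (x₀ - y) * ψ y) x₀ := by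
  have hKc := hK.continuous
  have hmeas : ∀ x, AEStronglyMeasurable (fun y => K (x - y) * ψ y) (volume.restrict (Ι a b)) :=
    fun x => (hKc.comp (continuous_const.sub continuous_id)).aestronglyMeasurable.mul hψ.def'.1
  have hdiff : ∀ᵐ y, DifferentiableAt ℝ K (x₀ - y) :=
    (volume.measurePreserving_sub_left x₀).quasiMeasurePreserving.ae hK.ae_differentiableAt_real
  refine (intervalIntegral.hasDerivAt_integral_of_dominated_loc_of_lip (bound := fun y => C * |ψ y|)
    univ_mem (Eventually.of_forall hmeas)
    (hψ.continuousOn_mul (hKc.comp (continuous_const.sub continuous_id)).continuousOn)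
    (((measurable_deriv K).comp (measurable_const.sub measurable_id)).aestronglyMeasurable.mul
      hψ.def'.1)
    (ae_of_all _ fun y _ => ?_) (hψ.abs.const_mul _)
    (hdiff.mono fun y hy _ => ?_)).2
  · refine LipschitzOnWith.mono (LipschitzWith.lipschitzOnWith ?_) (subset_univ _)
    refine LipschitzWith.of_dist_le_mul fun x x' => ?_
    have hKxy := hK.dist_le_mul (x - y) (x' - y)
    rw [Real.dist_eq, Real.dist_eq, sub_sub_sub_cancel_right] at hKxy
    rw [Real.dist_eq, Real.dist_eq, ← sub_mul, abs_mul, Real.coe_nnabs,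
      abs_of_nonneg (by positivity : (0 : ℝ) ≤ C * |ψ y|)]
    calc |K (x - y) - K (x' - y)| * |ψ y| ≤ C * |x - x'| * |ψ y| := by gcongr
      _ = C * |ψ y| * |x - x'| := by ring
  · simpa using (hy.hasDerivAt.comp x₀ ((hasDerivAt_id x₀).sub_const y)).mul_const (ψ y)

/-- The distance from `x` to `2πℤ`. -/
noncomputable def periodicAbs (x : ℝ) : ℝ := |x - 2 * π * ((round (x / (2 * π)) : ℤ) : ℝ)|

theorem Kper_eq_periodicAbs (x : ℝ) :
    Kper x = (1 / (4 * π)) * (periodicAbs x - π) ^ 2 - π / 12 := rfl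

theorem abs_sub_two_pi_mul (x : ℝ) (m : ℤ) :
    |x - 2 * π * m| = 2 * π * |x / (2 * π) - m| := by
  rw [← abs_of_pos two_pi_pos, ← abs_mul, abs_of_pos two_pi_pos, mul_sub,
    mul_div_cancel₀ _ two_pi_pos.ne']

theorem periodicAbs_le_abs_sub (x : ℝ) (m : ℤ) : periodicAbs x ≤ |x - 2 * π * m| := by
  rw [periodicAbs, abs_sub_two_pi_mul, abs_sub_two_pi_mul]
  exact mul_le_mul_of_nonneg_left (round_le _ m) two_pi_pos.le

theorem periodicAbs_le_pi (x : ℝ) : periodicAbs x ≤ π := by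
  rw [periodicAbs, abs_sub_two_pi_mul]
  nlinarith [abs_sub_round (x / (2 * π)), pi_pos]

theorem lipschitzWith_periodicAbs : LipschitzWith 1 periodicAbs := by
  refine LipschitzWith.of_le_add fun x y => ?_
  calc periodicAbs x ≤ |x - 2 * π * ((round (y / (2 * π)) : ℤ) : ℝ)| := periodicAbs_le_abs_sub _ _
    _ ≤ |y - 2 * π * ((round (y / (2 * π)) : ℤ) : ℝ)| + |x - y| := by
        rw [add_comm]; exact abs_sub_le _ _ _
    _ = periodicAbs y + dist x y := rfl

theorem periodicAbs_of_abs_le {t : ℝ} (ht : |t| ≤ π) : periodicAbs t = |t| := by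
  refine le_antisymm (by simpa using periodicAbs_le_abs_sub t 0) ?_
  obtain ⟨m, hm⟩ : ∃ m : ℤ, periodicAbs t = |t - 2 * π * m| := ⟨_, rfl⟩
  rcases eq_or_ne m 0 with rfl | hm0
  · simp [hm]
  · have h1 : (1 : ℝ) ≤ |(m : ℝ)| := by exact_mod_cast Int.one_le_abs hm0
    have h2 : 2 * π ≤ |2 * π * (m : ℝ)| := by
      rw [abs_mul, abs_of_pos two_pi_pos]; nlinarith [pi_pos]
    rw [hm]
    linarith [abs_sub_abs_le_abs_sub (2 * π * (m : ℝ)) t, abs_sub_comm t (2 * π * (m : ℝ))]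

theorem Kper_periodic : Function.Periodic Kper (2 * π) := by
  intro x
  have hr : round ((x + 2 * π) / (2 * π)) = round (x / (2 * π)) + 1 := by
    rw [add_div, div_self two_pi_pos.ne', round_add_one]
  simp only [Kper, hr]
  push_cast
  ring_nf

theorem Kper_of_abs_le {t : ℝ} (ht : |t| ≤ π) :
    Kper t = (1 / (4 * π)) * (|t| - π) ^ 2 - π / 12 := by
  rw [Kper_eq_periodicAbs, periodicAbs_of_abs_le ht]

theorem Kper_of_mem_Icc {t : ℝ} (ht : t ∈ Icc 0 (2 * π)) :
    Kper t = (1 / (4 * π)) * (t - π) ^ 2 - π / 12 := by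
  rcases le_total t π with h | h
  · rw [Kper_of_abs_le (abs_le.2 ⟨by linarith [pi_pos, ht.1], h⟩), abs_of_nonneg ht.1]
  · rw [← Kper_periodic.sub_eq, Kper_of_abs_le (abs_le.2 ⟨by linarith, by linarith [ht.2]⟩),
      abs_of_nonpos (by linarith [ht.2])]
    ring

theorem lipschitzWith_Kper : LipschitzWith (1 / 2) Kper := by
  refine LipschitzWith.of_dist_le_mul fun a b => ?_
  have hπ := pi_pos
  have hab : |periodicAbs a - periodicAbs b| ≤ |a - b| := by
    simpa [Real.dist_eq] using lipschitzWith_periodicAbs.dist_le_mul a b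
  have hsum : |periodicAbs a + periodicAbs b - 2 * π| ≤ 2 * π := by
    have := periodicAbs_le_pi a; have := periodicAbs_le_pi b
    have : 0 ≤ periodicAbs a := abs_nonneg _; have : 0 ≤ periodicAbs b := abs_nonneg _
    rw [abs_le]; constructor <;> linarith
  have hdiff : Kper a - Kper b =
      (periodicAbs a - periodicAbs b) * (periodicAbs a + periodicAbs b - 2 * π) / (4 * π) := by
    rw [Kper_eq_periodicAbs, Kper_eq_periodicAbs]; field_simp; ring
  rw [Real.dist_eq, Real.dist_eq, hdiff, abs_div, abs_mul, abs_of_pos (by positivity : 0 < 4 * π),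
    div_le_iff₀ (by positivity)]
  push_cast
  nlinarith [abs_nonneg (periodicAbs a - periodicAbs b), abs_nonneg (a - b)]

theorem continuous_Kper : Continuous Kper := lipschitzWith_Kper.continuous

noncomputable def dirichletGreen (u v : ℝ) : ℝ := min u v - u * v / π

theorem dirichletGreen_nonneg {u v : ℝ} (hu : u ∈ Icc 0 π) (hv : v ∈ Icc 0 π) :
    0 ≤ dirichletGreen u v := by
  have hπ := pi_pos
  rw [dirichletGreen, sub_nonneg, div_le_iff₀ hπ]
  rcases le_total u v with h | h
  · rw [min_eq_left h]; nlinarith [hu.1, hv.2]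
  · rw [min_eq_right h]; nlinarith [hv.1, hu.2]

theorem Kper_sub_sub_Kper_add {u v : ℝ} (hu : u ∈ Icc 0 π) (hv : v ∈ Icc 0 π) :
    Kper (u - v) - Kper (u + v) = dirichletGreen u v := by
  have hπ := pi_pos
  rw [Kper_of_abs_le (abs_le.2 ⟨by linarith [hu.1, hv.2], by linarith [hu.2, hv.1]⟩),
    Kper_of_mem_Icc ⟨by linarith [hu.1, hv.1], by linarith [hu.2, hv.2]⟩, dirichletGreen]
  rcases le_total u v with h | h
  · rw [abs_of_nonpos (by linarith), min_eq_left h]; field_simp; ring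
  · rw [abs_of_nonneg (by linarith), min_eq_right h]; field_simp; ring

theorem mul_integral_le_integral_dirichletGreen_mul {w : ℝ → ℝ} (hw : ContinuousOn w (Icc 0 π))
    (hw0 : ∀ v ∈ Icc 0 π, 0 ≤ w v) {u a : ℝ} (hu : 0 ≤ u) (hua : u ≤ a) (ha : a ≤ π) :
    u * ∫ v in a..π, (1 - v / π) * w v ≤ ∫ v in 0..π, dirichletGreen u v * w v := by
  have hint : IntervalIntegrable (fun v => dirichletGreen u v * w v) volume 0 π := by
    refine ContinuousOn.intervalIntegrable ?_
    rw [uIcc_of_le pi_pos.le]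
    exact ((continuous_const.min continuous_id).sub
      ((continuous_const.mul continuous_id).div_const π)).continuousOn.mul hw
  rw [← intervalIntegral.integral_add_adjacent_intervals (hint.mono_set ?_) (hint.mono_set ?_),
    ← intervalIntegral.integral_const_mul]
  · refine le_add_of_nonneg_of_le ?_ (le_of_eq (intervalIntegral.integral_congr fun v hv => ?_))
    · refine intervalIntegral.integral_nonneg (hu.trans hua) fun v hv => ?_
      have hv' : v ∈ Icc 0 π := ⟨hv.1, hv.2.trans ha⟩
      exact mul_nonneg (dirichletGreen_nonneg ⟨hu, hua.trans ha⟩ hv') (hw0 v hv')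
    · rw [uIcc_of_le ha] at hv
      simp only [dirichletGreen, min_eq_left (hua.trans hv.1)]
      ring
  all_goals apply uIcc_subset_uIcc <;> simp [hu.trans hua, ha, pi_pos.le]

theorem eqOn_zero_of_tendsto_integral_dirichletGreen_mul_div {w : ℝ → ℝ}
    (hw : ContinuousOn w (Icc 0 π)) (hw0 : ∀ v ∈ Icc 0 π, 0 ≤ w v)
    (hlim : Tendsto (fun u => (∫ v in 0..π, dirichletGreen u v * w v) / u) (𝓝[>] 0) (𝓝 0)) :
    EqOn w 0 (Icc 0 π) := by
  have hπ := pi_pos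
  refine EqOn.of_subset_closure (s := Ioo 0 π) (fun v₀ hv₀ => ?_) hw continuousOn_const
    Ioo_subset_Icc_self (by rw [closure_Ioo hπ.ne])
  by_contra hne
  have hv₀' : v₀ ∈ Icc 0 π := Ioo_subset_Icc_self hv₀
  have hpos : 0 < ∫ v in v₀ / 2..π, (1 - v / π) * w v := by
    refine intervalIntegral.integral_pos (by linarith [hv₀.2]) ?_ (fun v hv => ?_)
      ⟨v₀, ⟨by linarith [hv₀.1], hv₀.2.le⟩, ?_⟩
    · exact (continuous_const.sub (continuous_id.div_const π)).continuousOn.mul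
        (hw.mono (Icc_subset_Icc (by linarith [hv₀.1]) le_rfl))
    · have hv' : v ∈ Icc 0 π := ⟨by linarith [hv.1, hv₀.1], hv.2⟩
      exact mul_nonneg (by rw [sub_nonneg, div_le_one hπ]; exact hv.2) (hw0 v hv')
    · exact mul_pos (by rw [sub_pos, div_lt_one hπ]; exact hv₀.2)
        ((hw0 v₀ hv₀').lt_of_ne (Ne.symm hne))
  have hle : ∀ᶠ u in 𝓝[>] 0, (∫ v in v₀ / 2..π, (1 - v / π) * w v) ≤
      (∫ v in 0..π, dirichletGreen u v * w v) / u := by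
    filter_upwards [Ioo_mem_nhdsGT (show (0 : ℝ) < v₀ / 2 by linarith [hv₀.1])] with u hu
    rw [le_div_iff₀ hu.1, mul_comm]
    exact mul_integral_le_integral_dirichletGreen_mul hw hw0 hu.1.le hu.2.le (by linarith [hv₀.2])
  exact hpos.not_ge (ge_of_tendsto hlim hle)

theorem differentiable_Kconv {ψ : ℝ → ℝ} (hψ : IntervalIntegrable ψ volume (-π) π) :
    Differentiable ℝ (Kconv ψ) := fun x =>
  (lipschitzWith_Kper.hasDerivAt_intervalIntegral_comp_sub_mul hψ x).differentiableAt

theorem Kconv_sub {φ ψ : ℝ → ℝ} (hφ : IntervalIntegrable φ volume (-π) π)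
    (hψ : IntervalIntegrable ψ volume (-π) π) : Kconv (φ - ψ) = Kconv φ - Kconv ψ := by
  ext x
  have hK : ContinuousOn (fun y => Kper (x - y)) [[-π, π]] :=
    (continuous_Kper.comp (continuous_const.sub continuous_id)).continuousOn
  simp only [Kconv, Pi.sub_apply, mul_sub]
  exact intervalIntegral.integral_sub (hφ.continuousOn_mul hK) (hψ.continuousOn_mul hK)

theorem deriv_Kconv_eq_zero {F ψ : ℝ → ℝ} {B l : ℝ} (hF : Continuous F)
    (hFne : ∀ᶠ y in 𝓝[≠] ψ l, F y ≠ F (ψ l)) (hψ : ContinuousAt ψ l)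
    (heq : ∀ x, F (ψ x) = -Kconv ψ x + B)
    (hext : (∀ᶠ x in 𝓝[≠] l, ψ x < ψ l) ∨ (∀ᶠ x in 𝓝[≠] l, ψ l < ψ x)) :
    deriv (Kconv ψ) l = 0 := by
  have hK : Kconv ψ = (fun t => B - t) ∘ F ∘ ψ := funext fun x => by simp [heq]
  suffices IsLocalExtr (F ∘ ψ) l by
    rw [hK]
    exact (this.comp_antitone fun a b hab => sub_le_sub_left hab B).deriv_eq_zero
  rcases hext with h | h
  · obtain ⟨a, ha, hsub⟩ := mem_nhdsLT_iff_exists_Ioo_subset.1 (nhdsLT_le_nhdsNE _ hFne)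
    refine isLocalExtr_comp_of_eventually_mem isPreconnected_Ioo hF.continuousOn
      (fun y hy => hsub hy) ?_
    filter_upwards [h, nhdsWithin_le_nhds (hψ.eventually (Ioi_mem_nhds ha))] with x h1 h2
    exact ⟨h2, h1⟩
  · obtain ⟨a, ha, hsub⟩ := mem_nhdsGT_iff_exists_Ioo_subset.1 (nhdsGT_le_nhdsNE _ hFne)
    refine isLocalExtr_comp_of_eventually_mem isPreconnected_Ioo hF.continuousOn
      (fun y hy => hsub hy) ?_
    filter_upwards [h, nhdsWithin_le_nhds (hψ.eventually (Iio_mem_nhds ha))] with x h1 h2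
    exact ⟨h1, h2⟩

theorem Kconv_add {w : ℝ → ℝ} (hw : Function.Periodic w (2 * π)) (x u : ℝ) :
    Kconv w (x + u) = ∫ v in (-π)..π, Kper (u - v) * w (x + v) := by
  have hper : Function.Periodic (fun v => Kper (u - v) * w (x + v)) (2 * π) := fun v => by
    simp only [← add_assoc, hw _, sub_add_eq_sub_sub, Kper_periodic.sub_eq]
  calc Kconv w (x + u)
      = ∫ y in x + (-π - x)..x + (-π - x + 2 * π), Kper (x + u - y) * w y := by
        rw [Kconv]; ring_nf
    _ = ∫ v in (-π - x)..(-π - x + 2 * π), Kper (x + u - (x + v)) * w (x + v) :=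
        (intervalIntegral.integral_comp_add_left (fun y => Kper (x + u - y) * w y) x).symm
    _ = ∫ v in (-π - x)..(-π - x + 2 * π), Kper (u - v) * w (x + v) := by
        simp only [add_sub_add_left_eq_sub]
    _ = ∫ v in (-π)..(-π + 2 * π), Kper (u - v) * w (x + v) := hper.intervalIntegral_add_eq _ _
    _ = ∫ v in (-π)..π, Kper (u - v) * w (x + v) := by ring_nf

theorem Kconv_add_eq_integral_dirichletGreen_mul {w : ℝ → ℝ} (hw : Continuous w)
    (hper : Function.Periodic w (2 * π)) {l : ℝ} (hodd : ∀ v, w (l - v) = -w (l + v)) {u : ℝ}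
    (hu : u ∈ Icc 0 π) :
    Kconv w (l + u) = ∫ v in 0..π, dirichletGreen u v * w (l + v) := by
  set f := fun v => Kper (u - v) * w (l + v)
  have hf : Continuous f :=
    (continuous_Kper.comp (continuous_const.sub continuous_id)).mul
      (hw.comp (continuous_const.add continuous_id))
  have hrefl := intervalIntegral.integral_comp_neg (a := 0) (b := π) f
  rw [neg_zero] at hrefl
  rw [Kconv_add hper, ← intervalIntegral.integral_add_adjacent_intervals
    (hf.intervalIntegrable (-π) 0) (hf.intervalIntegrable 0 π), ← hrefl,
    ← intervalIntegral.integral_add (f := fun v => f (-v))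
      ((hf.comp continuous_neg).intervalIntegrable _ _) (hf.intervalIntegrable _ _)]
  refine intervalIntegral.integral_congr fun v hv => ?_
  rw [uIcc_of_le pi_pos.le] at hv
  simp only [f, sub_neg_eq_add, ← sub_eq_add_neg, hodd, ← Kper_sub_sub_Kper_add hu hv]
  ring

theorem eqOn_zero_of_hasDerivAt_Kconv {w : ℝ → ℝ} (hw : Continuous w)
    (hper : Function.Periodic w (2 * π)) {l : ℝ} (hodd : ∀ v, w (l - v) = -w (l + v))
    (hw0 : ∀ v ∈ Icc 0 π, 0 ≤ w (l + v)) (hd : HasDerivAt (Kconv w) 0 l) :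
    EqOn (fun v => w (l + v)) 0 (Icc 0 π) := by
  have hG := fun u (hu : u ∈ Icc 0 π) => Kconv_add_eq_integral_dirichletGreen_mul hw hper hodd hu
  have hl : Kconv w l = 0 := by
    rw [← add_zero l, hG 0 ⟨le_rfl, pi_pos.le⟩]
    refine (intervalIntegral.integral_congr fun v hv => ?_).trans intervalIntegral.integral_zero
    rw [uIcc_of_le pi_pos.le] at hv
    simp [dirichletGreen, hv.1]
  refine eqOn_zero_of_tendsto_integral_dirichletGreen_mul_div
    (hw.comp (continuous_const.add continuous_id)).continuousOn hw0 ?_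
  refine hd.tendsto_slope_zero_right.congr' ?_
  filter_upwards [Ioo_mem_nhdsGT pi_pos] with u hu
  rw [hl, sub_zero, smul_eq_mul, hG u ⟨hu.1.le, hu.2.le⟩, inv_mul_eq_div]

theorem Function.Periodic.eq_zero_of_eqOn_Icc_of_odd {w : ℝ → ℝ}
    (hper : Function.Periodic w (2 * π)) {l : ℝ} (hodd : ∀ v, w (l - v) = -w (l + v)) (hz : EqOn (fun v => w (l + v)) 0 (Icc 0 π))
    (x : ℝ) : w x = 0 := by
  obtain ⟨y, hy, hxy⟩ := hper.exists_mem_Ico two_pi_pos x (l - π)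
  rw [hxy]
  rcases le_total l y with h | h
  · simpa using hz ⟨sub_nonneg.2 h, by linarith [hy.2]⟩
  · have hz' : w (l + (l - y)) = 0 := hz ⟨sub_nonneg.2 h, by linarith [hy.1]⟩
    rw [← sub_sub_cancel l y, hodd, hz', neg_zero]

theorem boundary_point_lemma_highest_general (F : ℝ → ℝ)
    (hF : ∀ x, AnalyticAt ℝ F x)
    (B l : ℝ) (φ φt : ℝ → ℝ)
    (hφc : Continuous φ) (hφtc : Continuous φt)
    (hφp : Function.Periodic φ (2 * π)) (hφtp : Function.Periodic φt (2 * π))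
    (heq : ∀ x, F (φ x) = -(Kconv φ x) + B)
    (heqt : ∀ x, F (φt x) = -(Kconv φt x) + B)
    (hge : ∀ x ∈ Set.Icc l (l + π), φt x ≤ φ x)
    (hodd : ∀ x, φ (2 * l - x) - φt (2 * l - x) = -(φ x - φt x))
    (hval : φ l = φt l)
    (hhigher : ∃ m : ℕ, 2 ≤ m ∧ iteratedDeriv m F (φ l) ≠ 0)
    (hextφ : ∃ δ > (0 : ℝ),
      (∀ x, 0 < |x - l| → |x - l| < δ → φ x < φ l) ∨
      (∀ x, 0 < |x - l| → |x - l| < δ → φ l < φ x))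
    (hextφt : ∃ δ > (0 : ℝ),
      (∀ x, 0 < |x - l| → |x - l| < δ → φt x < φt l) ∨
      (∀ x, 0 < |x - l| → |x - l| < δ → φt l < φt x)) :
    ∀ x, φ x = φt x := by
  obtain ⟨m, hm, hFm⟩ := hhigher
  obtain ⟨δ, hδ, hext⟩ := hextφ
  obtain ⟨δt, hδt, hextt⟩ := hextφt
  have hFc : Continuous F := continuous_iff_continuousAt.2 fun x => (hF x).continuousAt
  have hFne := (hF (φ l)).eventually_ne_of_iteratedDeriv_ne_zero (by omega) hFm
  have hd : deriv (Kconv φ) l = 0 :=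
    deriv_Kconv_eq_zero hFc hFne hφc.continuousAt heq <|
      hext.imp (eventually_nhdsNE_of_abs_sub_lt hδ) (eventually_nhdsNE_of_abs_sub_lt hδ)
  have hdt : deriv (Kconv φt) l = 0 :=
    deriv_Kconv_eq_zero hFc (by rwa [← hval]) hφtc.continuousAt heqt <|
      hextt.imp (eventually_nhdsNE_of_abs_sub_lt hδt) (eventually_nhdsNE_of_abs_sub_lt hδt)
  have hφi : IntervalIntegrable φ volume (-π) π := hφc.intervalIntegrable _ _
  have hφti : IntervalIntegrable φt volume (-π) π := hφtc.intervalIntegrable _ _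
  have hderiv : HasDerivAt (Kconv (φ - φt)) 0 l := by
    rw [Kconv_sub hφi hφti]
    simpa [hd, hdt] using
      (differentiable_Kconv hφi l).hasDerivAt.sub (differentiable_Kconv hφti l).hasDerivAt
  have hodd' : ∀ v, (φ - φt) (l - v) = -(φ - φt) (l + v) := fun v => by
    simpa [show 2 * l - (l + v) = l - v by ring] using hodd (l + v)
  have hzero := eqOn_zero_of_hasDerivAt_Kconv (hφc.sub hφtc) (hφp.sub hφtp) hodd'
    (fun v hv => sub_nonneg.2 (hge _ ⟨by linarith [hv.1], by linarith [hv.2]⟩)) hderiv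
  exact fun x => sub_eq_zero.1 ((hφp.sub hφtp).eq_zero_of_eqOn_Icc_of_odd hodd' hzero x)

/-- Boundary point lemma for highest waves (`β = 0`): if two ordered solutions of
`F(ψ) = −K∗ψ + B`, whose difference is odd about `λ`, both attain an isolated local
extremum at `λ` with the same critical value `φ̄ ≠ 0`, `F′(φ̄) = 0` and some
`F⁽ⁿ⁾(φ̄) ≠ 0` for `n ≥ 2`, then they coincide. -/
theorem boundary_point_lemma_highest (F : ℝ → ℝ) (c : ℝ) (hc : 0 < c)
    (hF : ∀ x, AnalyticAt ℝ F x) (hF0 : F 0 = 0) (hF1 : deriv F 0 = -c)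
    (B l : ℝ) (φ φt : ℝ → ℝ)
    (hφc : Continuous φ) (hφtc : Continuous φt)
    (hφp : Function.Periodic φ (2 * π)) (hφtp : Function.Periodic φt (2 * π))
    (hφ0 : (∫ y in (-π)..π, φ y) = 0) (hφt0 : (∫ y in (-π)..π, φt y) = 0)
    (heq : ∀ x, F (φ x) = -(Kconv φ x) + B)
    (heqt : ∀ x, F (φt x) = -(Kconv φt x) + B)
    (hge : ∀ x ∈ Set.Icc l (l + π), φt x ≤ φ x)
    (hodd : ∀ x, φ (2 * l - x) - φt (2 * l - x) = -(φ x - φt x))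
    (hval : φ l = φt l) (hvne : φ l ≠ 0) (hcrit : deriv F (φ l) = 0)
    (hhigher : ∃ m : ℕ, 2 ≤ m ∧ iteratedDeriv m F (φ l) ≠ 0)
    (hextφ : ∃ δ > (0 : ℝ),
      (∀ x, 0 < |x - l| → |x - l| < δ → φ x < φ l) ∨
      (∀ x, 0 < |x - l| → |x - l| < δ → φ l < φ x))
    (hextφt : ∃ δ > (0 : ℝ),
      (∀ x, 0 < |x - l| → |x - l| < δ → φt x < φt l) ∨
      (∀ x, 0 < |x - l| → |x - l| < δ → φt l < φt x)) :
    ∀ x, φ x = φt x :=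
  boundary_point_lemma_highest_general F hF B l φ φt hφc hφtc hφp hφtp heq heqt hge hodd hval
    hhigher hextφ hextφt
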